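/- arXiv:1805.03074 — 3 statements merged into one kernel-verified Lean document; each statement's English description precedes it below -/
import Mathlib

section
/- Let E, F, ω : ℝ → ℝ with ω(u) > 0 and E(u)·ω(u)² - F(u)² = ω(u)² for all u. Let u, v : ℝ → ℝ be differentiable and θ₀ ∈ (0, π). If for all s: F(u(s))·u'(s) + ω(u(s))²·v'(s) = ω(u(s))·cos θ₀ and u'(s)² = sin² θ₀, then E(u(s))·u'(s)² + 2F(u(s))·u'(s)·v'(s) + ω(u(s))²·v'(s)² = 1 for all s, i.e. the curve s ↦ (u(s), v(s)) has unit speed. -/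
open Real

/-- Lemma 2.2 (converse direction): the angle condition together with
`u'² = sin² θ₀` implies the curve has unit speed. -/
theorem stmt_2 (E F ω : ℝ → ℝ)
    (hω : ∀ x, 0 < ω x)
    (hEF : ∀ x, E x * (ω x) ^ 2 - (F x) ^ 2 = (ω x) ^ 2)
    (u v : ℝ → ℝ) (hu : Differentiable ℝ u) (hv : Differentiable ℝ v)
    (θ₀ : ℝ) (hθ : θ₀ ∈ Set.Ioo 0 π)
    (hangle : ∀ s, F (u s) * deriv u s + (ω (u s)) ^ 2 * deriv v s
      = ω (u s) * Real.cos θ₀)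
    (hup : ∀ s, (deriv u s) ^ 2 = (Real.sin θ₀) ^ 2) :
    ∀ s, E (u s) * (deriv u s) ^ 2
      + 2 * F (u s) * deriv u s * deriv v s
      + (ω (u s)) ^ 2 * (deriv v s) ^ 2 = 1 := by
  intro s
  have hw := hω (u s)
  have hE := hEF (u s)
  have ha := hangle s
  have hb := hup s
  have hpyth : Real.sin θ₀ ^ 2 + Real.cos θ₀ ^ 2 = 1 := Real.sin_sq_add_cos_sq θ₀
  have hw2 : (ω (u s)) ^ 2 ≠ 0 := by positivity
  have hsq : (F (u s) * deriv u s + (ω (u s)) ^ 2 * deriv v s) ^ 2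
      = (ω (u s) * Real.cos θ₀) ^ 2 := by rw [ha]
  apply mul_left_cancel₀ hw2
  nlinarith [hsq, hb, hE, hpyth]
end

section
/- Let ω : ℝ → ℝ be positive and twice differentiable with ω - R²ω'' = 0 and ω² - R²(ω')² = a where a > 0, R > 0, and let θ₀ ∈ (0, π/2). Set η(u) = R·ω'(u)/ω(u). Then |η(u)| < 1, √(1 - η(u)²) = √a/ω(u), and v(u) = (R·cot θ₀/√a)·arcsin(η(u)) satisfies v'(u) = cot θ₀/ω(u). -/
/-!
From `ω² - R²ω'² = a` we get `1 - η² = a/ω² > 0`, and combining it with `ω = R²ω''` gives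
`ω''ω - ω'² = a/R²`, so `η' = a/(Rω²)`. The chain rule for `arcsin` then yields
`v' = (R cot θ₀/√a) · (a/(Rω²)) · (ω/√a) = cot θ₀/ω`.
-/

open Real

theorem HasDerivAt.arcsin {f : ℝ → ℝ} {f' x : ℝ} (hf : HasDerivAt f f' x) (h : |f x| < 1) :
    HasDerivAt (fun y => arcsin (f y)) (f' / √(1 - f x ^ 2)) x := by
  obtain ⟨h₁, h₂⟩ := abs_lt.mp h
  have h := (hasDerivAt_arcsin h₁.ne' h₂.ne).comp x hf
  rw [one_div, ← div_eq_inv_mul] at h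
  exact h

theorem hasDerivAt_const_mul_deriv_div {ω : ℝ → ℝ} {u : ℝ} (R : ℝ)
    (hd : DifferentiableAt ℝ ω u) (hd2 : DifferentiableAt ℝ (deriv ω) u) (hω : ω u ≠ 0) :
    HasDerivAt (fun x => R * deriv ω x / ω x)
      (R * (deriv (deriv ω) u * ω u - deriv ω u ^ 2) / ω u ^ 2) u := by
  exact ((hd2.hasDerivAt.const_mul R).div hd.hasDerivAt hω).congr_deriv (by ring)

theorem deriv_deriv_mul_sub_sq_eq {w w' w'' R a : ℝ} (hR : R ≠ 0)
    (hode : w - R ^ 2 * w'' = 0) (hfirst : w ^ 2 - R ^ 2 * w' ^ 2 = a) :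
    w'' * w - w' ^ 2 = a / R ^ 2 := by
  field_simp
  linear_combination (-w) * hode + hfirst

theorem one_sub_sq_mul_div_eq {w w' R a : ℝ} (hw : w ≠ 0) (hfirst : w ^ 2 - R ^ 2 * w' ^ 2 = a) :
    1 - (R * w' / w) ^ 2 = a / w ^ 2 := by
  field_simp
  linear_combination hfirst

theorem stmt_12_general (ω : ℝ → ℝ) (R a : ℝ) (hR : 0 < R) (ha : 0 < a)
    (hpos : ∀ u, 0 < ω u)
    (hd : Differentiable ℝ ω) (hd2 : Differentiable ℝ (deriv ω))
    (hode : ∀ u, ω u - R ^ 2 * deriv (deriv ω) u = 0)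
    (hfirst : ∀ u, (ω u) ^ 2 - R ^ 2 * (deriv ω u) ^ 2 = a)
    (θ₀ : ℝ)
    (η : ℝ → ℝ) (hη : ∀ u, η u = R * deriv ω u / ω u)
    (v : ℝ → ℝ)
    (hv : ∀ u, v u = (R * Real.cot θ₀ / Real.sqrt a) * Real.arcsin (η u)) :
    ∀ u, |η u| < 1 ∧ Real.sqrt (1 - (η u) ^ 2) = Real.sqrt a / ω u ∧
      deriv v u = Real.cot θ₀ / ω u := by
  obtain rfl : η = fun u => R * deriv ω u / ω u := funext hη
  obtain rfl : v = fun u => (R * cot θ₀ / √a) * arcsin (R * deriv ω u / ω u) := funext hv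
  intro u
  have hω := hpos u
  have hgap := one_sub_sq_mul_div_eq hω.ne' (hfirst u)
  have habs : |R * deriv ω u / ω u| < 1 := by
    rw [← sq_lt_one_iff_abs_lt_one]
    linarith [div_pos ha (pow_pos hω 2)]
  have hsqrt : √(1 - (R * deriv ω u / ω u) ^ 2) = √a / ω u := by
    rw [hgap, sqrt_div ha.le, sqrt_sq hω.le]
  refine ⟨habs, hsqrt, ?_⟩
  have hη' := hasDerivAt_const_mul_deriv_div R (hd u) (hd2 u) hω.ne'
  rw [deriv_deriv_mul_sub_sq_eq hR.ne' (hode u) (hfirst u)] at hη'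
  rw [((hη'.arcsin habs).const_mul _).deriv, hsqrt]
  have hsa : √a ≠ 0 := (sqrt_pos.mpr ha).ne'
  field_simp
  rw [sq_sqrt ha.le]

/-- Proposition 6.2, case `a > 0`: with `η = Rω'/ω` one has `|η| < 1`,
`√(1 - η²) = √a/ω`, and `v(u) = (R cot θ₀/√a)·arcsin η` solves
`v' = cot θ₀/ω`. -/
theorem stmt_12 (ω : ℝ → ℝ) (R a : ℝ) (hR : 0 < R) (ha : 0 < a)
    (hpos : ∀ u, 0 < ω u)
    (hd : Differentiable ℝ ω) (hd2 : Differentiable ℝ (deriv ω))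
    (hode : ∀ u, ω u - R ^ 2 * deriv (deriv ω) u = 0)
    (hfirst : ∀ u, (ω u) ^ 2 - R ^ 2 * (deriv ω u) ^ 2 = a)
    (θ₀ : ℝ) (hθ : θ₀ ∈ Set.Ioo 0 (π / 2))
    (η : ℝ → ℝ) (hη : ∀ u, η u = R * deriv ω u / ω u)
    (v : ℝ → ℝ)
    (hv : ∀ u, v u = (R * Real.cot θ₀ / Real.sqrt a) * Real.arcsin (η u)) :
    ∀ u, |η u| < 1 ∧ Real.sqrt (1 - (η u) ^ 2) = Real.sqrt a / ω u ∧
      deriv v u = Real.cot θ₀ / ω u :=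
  stmt_12_general ω R a hR ha hpos hd hd2 hode hfirst θ₀ η hη v hv
end

section
/- Let ω : ℝ → ℝ be positive and twice differentiable, let θ₀ ∈ (0, π/2), and let u : ℝ → ℝ be differentiable with u'(s)² = sin² θ₀ for all s. If ω(u(s))·cos θ₀ is constant in s (Clairaut condition for a geodesic loxodrome), then ω'(u(s)) = 0 for all s, ω is constant on the range of u, which is an interval since u is non-constant with u' ≠ 0, hence ω'' = 0 on that interval and the Gauss curvature K(u(s)) = -ω''(u(s))/ω(u(s)) vanishes there. -/
open Real

/-- Theorem 3.1: a loxodrome with `θ₀ ∈ (0, π/2)` which is also a geodesic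
(Clairaut condition: `ω(u(s)) cos θ₀` constant) forces `ω' = 0`, `ω'' = 0`
along the curve, hence the Gauss curvature `K = -ω''/ω` vanishes there. -/
theorem stmt_19 (ω : ℝ → ℝ)
    (hpos : ∀ x, 0 < ω x)
    (hsmooth : ContDiff ℝ 2 ω)
    (θ₀ : ℝ) (hθ : θ₀ ∈ Set.Ioo 0 (π / 2))
    (u : ℝ → ℝ) (hu : Differentiable ℝ u)
    (hup : ∀ s, (deriv u s) ^ 2 = (Real.sin θ₀) ^ 2)
    (hclairaut : ∃ c : ℝ, ∀ s, ω (u s) * Real.cos θ₀ = c) :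
    (∀ s, deriv ω (u s) = 0) ∧
      (∀ s, deriv (deriv ω) (u s) = 0) ∧
      (∀ s, -deriv (deriv ω) (u s) / ω (u s) = 0) := by
  obtain ⟨hθ0, hθ1⟩ := hθ
  have hsin : 0 < Real.sin θ₀ :=
    Real.sin_pos_of_pos_of_lt_pi hθ0 (lt_trans hθ1 (by linarith [Real.pi_pos]))
  have hcos : 0 < Real.cos θ₀ := Real.cos_pos_of_mem_Ioo ⟨by linarith, hθ1⟩
  -- each deriv u s is ± sin θ₀
  have hpm : ∀ s, deriv u s = Real.sin θ₀ ∨ deriv u s = -Real.sin θ₀ := by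
    intro s
    have h := hup s
    have : (deriv u s - Real.sin θ₀) * (deriv u s + Real.sin θ₀) = 0 := by nlinarith
    rcases mul_eq_zero.mp this with h' | h'
    · exact Or.inl (by linarith)
    · exact Or.inr (by linarith)
  -- deriv u is constant, by Darboux
  have hoc : Set.OrdConnected (deriv u '' Set.univ) :=
    Set.ordConnected_univ.image_deriv (fun x _ => hu x)
  have key : ∀ t₁ t₂, deriv u t₁ = -Real.sin θ₀ → deriv u t₂ = Real.sin θ₀ → False := by
    intro t₁ t₂ h1 h2
    have h0 : (0:ℝ) ∈ deriv u '' Set.univ := by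
      refine hoc.out ⟨t₁, Set.mem_univ t₁, rfl⟩ ⟨t₂, Set.mem_univ t₂, rfl⟩ ?_
      rw [h1, h2]
      exact Set.mem_Icc.mpr ⟨by linarith, by linarith⟩
    obtain ⟨t, -, ht⟩ := h0
    have := hup t
    rw [ht] at this
    nlinarith
  have hconst : ∀ s, deriv u s = deriv u 0 := by
    intro s
    rcases hpm s with hs | hs <;> rcases hpm 0 with h0 | h0
    · rw [hs, h0]
    · exact absurd (key 0 s h0 hs) (by simp)
    · exact absurd (key s 0 hs h0) (by simp)
    · rw [hs, h0]
  -- u is affine, hence surjective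
  set c := deriv u 0 with hc
  have hcne : c ≠ 0 := by
    rcases hpm 0 with h | h <;> rw [hc, h] <;> [exact ne_of_gt hsin; exact ne_of_lt (by linarith)]
  have haff : ∀ s, u s = u 0 + c * s := by
    intro s
    have h : ∀ x, deriv (fun s => u s - c * s) x = 0 := by
      intro x
      rw [deriv_fun_sub (hu x) (by fun_prop), hconst x]
      have hd : deriv (fun s : ℝ => c * s) x = c := by
        simpa using ((hasDerivAt_id x).const_mul c).deriv
      rw [hd]; ring
    have := is_const_of_deriv_eq_zero (f := fun s => u s - c * s)
      (by fun_prop) h s 0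
    simp at this
    linarith
  have hsurj : Function.Surjective u := by
    intro x
    exact ⟨(x - u 0) / c, by rw [haff]; field_simp; ring⟩
  -- ω is globally constant
  obtain ⟨k, hk⟩ := hclairaut
  have hωconst : ∀ x, ω x = k / Real.cos θ₀ := by
    intro x
    obtain ⟨s, rfl⟩ := hsurj x
    rw [← hk s]; field_simp
  have hω : ω = fun _ => k / Real.cos θ₀ := funext hωconst
  have hd1 : deriv ω = fun _ => 0 := by
    funext x; rw [hω]; simp
  refine ⟨fun s => by rw [hd1], fun s => by rw [hd1]; simp, fun s => by rw [hd1]; simp⟩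
end
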